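/- Let 1 ≤ L and N ≥ L + n. If the input sequence {u_k}_{k=0}^{N−1} is K_u-PE of order L + n for some symmetric positive definite K_u ∈ ℝ^{m(L+n)×m(L+n)}, then for every initial state x_0 ∈ ℝ^n, the state sequence {x_k} generated from x_0 under u satisfies [H_1(x_{[0,N−L]}); H_L(u)] [H_1(x_{[0,N−L]}); H_L(u)]^T ⪰ (1/(n+1)) Z̃ K_u Z̃^T in the Loewner order. -/

import Mathlib

open Matrix Finset

noncomputable def stateSeq {n m : ℕ} (A : Matrix (Fin n) (Fin n) ℝ) (B : Matrix (Fin n) (Fin m) ℝ)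
    (x0 : Fin n → ℝ) (u : ℕ → Fin m → ℝ) : ℕ → Fin n → ℝ
  | 0 => x0
  | k + 1 => A.mulVec (stateSeq A B x0 u k) + B.mulVec (u k)

/-- Markov parameters `Γ̃_j` of the extended system with output `φ_k = (x_k; u_k)`:
`Γ̃_0 = D̃ = [0; I_m]` and `Γ̃_j = C̃ A^(j-1) B = [A^(j-1) B; 0]` for `j ≥ 1`. -/
noncomputable def MarkovT {n m : ℕ} (A : Matrix (Fin n) (Fin n) ℝ) (B : Matrix (Fin n) (Fin m) ℝ) :
    ℕ → Matrix (Fin n ⊕ Fin m) (Fin m) ℝ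
  | 0 => Matrix.of (Sum.elim (fun _ _ => (0 : ℝ)) (fun i l => if i = l then 1 else 0))
  | j + 1 => Matrix.of (Sum.elim (fun i l => (A ^ j * B) i l) (fun _ _ => 0))

/-- `M̃ = [M̃_n ⋯ M̃_1 M̃_0]` with `M̃_j = ∑_{q=0}^j d_{j-q} Γ̃_q`. -/
noncomputable def Mtil {n m : ℕ} (A : Matrix (Fin n) (Fin n) ℝ) (B : Matrix (Fin n) (Fin m) ℝ)
    (d : ℕ → ℝ) : Matrix (Fin n ⊕ Fin m) (Fin (n + 1) × Fin m) ℝ :=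
  Matrix.of fun i jl =>
    (∑ q ∈ Finset.range ((n - (jl.1 : ℕ)) + 1),
      d ((n - (jl.1 : ℕ)) - q) • MarkovT A B q) i jl.2

/-- The Toeplitz matrix `T ∈ ℝ^{(L-1)×(L+n-1)}` with `T_{i,j} = d_{n-(j-i)}` for
`0 ≤ j - i ≤ n` and zero otherwise. -/
noncomputable def Tmat (d : ℕ → ℝ) (n L : ℕ) : Matrix (Fin (L - 1)) (Fin (L + n - 1)) ℝ :=
  Matrix.of fun i j =>
    if (i : ℕ) ≤ (j : ℕ) ∧ (j : ℕ) ≤ (i : ℕ) + n then d (n - ((j : ℕ) - (i : ℕ))) else 0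

/-- The block matrix `Z̃ = [[M̃, 0], [0, T ⊗ I_m]]`, with `M̃` occupying the first `m(n+1)`
columns and `T ⊗ I_m` occupying the last `m(L+n-1)` columns. -/
noncomputable def Ztil {n m : ℕ} (A : Matrix (Fin n) (Fin n) ℝ) (B : Matrix (Fin n) (Fin m) ℝ)
    (d : ℕ → ℝ) (L : ℕ) :
    Matrix ((Fin n ⊕ Fin m) ⊕ (Fin (L - 1) × Fin m)) (Fin (L + n) × Fin m) ℝ :=
  Matrix.of fun i jl =>
    match i with
    | Sum.inl i' =>
        if h : (jl.1 : ℕ) ≤ n then Mtil A B d i' (⟨(jl.1 : ℕ), by omega⟩, jl.2) else 0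
    | Sum.inr il' =>
        if h : 1 ≤ (jl.1 : ℕ) then
          Tmat d n L il'.1 ⟨(jl.1 : ℕ) - 1, by have := jl.1.isLt; omega⟩ *
            (if il'.2 = jl.2 then 1 else 0)
        else 0

/-- Reindexing of `(x_k; u_{[k,k+L-1]})`-coordinates as the coordinates of the extended-output
window `(φ_k; u_{[k+1,k+L-1]})` used in `Z̃`. -/
def embed (n m L : ℕ) : Fin n ⊕ (Fin L × Fin m) → (Fin n ⊕ Fin m) ⊕ (Fin (L - 1) × Fin m) :=
  fun i =>
    match i with
    | Sum.inl i' => Sum.inl (Sum.inl i')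
    | Sum.inr il =>
        if h : (il.1 : ℕ) = 0 then Sum.inl (Sum.inr il.2)
        else Sum.inr (⟨(il.1 : ℕ) - 1, by have := il.1.isLt; omega⟩, il.2)

/-- The matrix `[H_1(x_{[0,N-L]}); H_L(u)]` whose `k`-th column is `(x_k; u_{[k,k+L-1]})`. -/
noncomputable def Hxu {n m : ℕ} (A : Matrix (Fin n) (Fin n) ℝ) (B : Matrix (Fin n) (Fin m) ℝ)
    (x0 : Fin n → ℝ) (u : ℕ → Fin m → ℝ) (L N : ℕ) :
    Matrix (Fin n ⊕ (Fin L × Fin m)) (Fin (N - L + 1)) ℝ :=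
  Matrix.of fun i k =>
    Sum.elim (fun i' : Fin n => stateSeq A B x0 u (k : ℕ) i')
      (fun il : Fin L × Fin m => u ((k : ℕ) + (il.1 : ℕ)) il.2) i

/-!
Let `w_k = (x_k; u_{[k,k+L-1]})` be the columns of `Hxu`. Filtering them with the annihilating
polynomial `d` removes the free response (`∑ₛ d_{n-s} Aˢ = 0`), so `∑ₛ d_{n-s} w_{k+s}` depends
only on the inputs and equals `Z̃ u_{[k,k+L+n-1]}`. In matrix form `Z̃ H_{L+n}(u) = Hxu S` with `S`
a banded Toeplitz matrix, and since `‖d‖ = 1` Cauchy–Schwarz gives `S Sᵀ ⪯ (n+1) I`. Hence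
`Z̃ K_u Z̃ᵀ ⪯ Z̃ H_{L+n}(u) H_{L+n}(u)ᵀ Z̃ᵀ = Hxu S Sᵀ Hxuᵀ ⪯ (n+1) Hxu Hxuᵀ`.
-/

theorem Fin.sum_ite_window {R : Type*} [AddCommMonoid R] (f : ℕ → R) (a n M : ℕ) :
    ∑ j : Fin M, (if a ≤ (j : ℕ) ∧ (j : ℕ) ≤ a + n then f j else 0) =
      ∑ s ∈ range (n + 1), if a + s < M then f (a + s) else 0 := by
  rw [Fin.sum_univ_eq_sum_range (fun t => if a ≤ t ∧ t ≤ a + n then f t else 0),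
    ← Nat.add_sub_cancel_left (n := a) (m := n + 1), ← sum_Ico_eq_sum_range
      (fun t => if t < M then f t else 0)]
  have hL : ∀ t, (a ≤ t ∧ t ≤ a + n) ↔ t ∈ Ico a (a + (n + 1)) := fun t => by
    simp only [mem_Ico]; omega
  have hR : ∀ t, t < M ↔ t ∈ range M := fun t => by simp
  simp only [hL, hR, sum_ite_mem, inter_comm]

theorem sum_range_shift_le_of_support {f : ℕ → ℝ} {p : ℕ} (hf : ∀ t, 0 ≤ f t)
    (hsupp : ∀ t, p ≤ t → f t = 0) (q s : ℕ) :
    ∑ k ∈ range q, f (k + s) ≤ ∑ t ∈ range p, f t := by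
  calc ∑ k ∈ range q, f (k + s) = ∑ t ∈ Ico s (s + q), f t := by
        rw [sum_Ico_eq_sum_range, Nat.add_sub_cancel_left]
        simp only [add_comm]
    _ ≤ ∑ t ∈ Ico s (s + q) ∪ range p, f t :=
        sum_le_sum_of_subset_of_nonneg subset_union_left fun t _ _ => hf t
    _ = ∑ t ∈ range p, f t :=
        (sum_subset subset_union_right fun t _ ht => hsupp t (by simpa using ht)).symm

theorem Matrix.submatrix_mul_mul_conjTranspose {ι κ τ R : Type*} [Fintype κ] [Semiring R]
    [StarRing R] (Z : Matrix ι κ R) (K : Matrix κ κ R) (e : τ → ι) :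
    (Z * K * Zᴴ).submatrix e e = Z.submatrix e id * K * (Z.submatrix e id)ᴴ := by
  rw [conjTranspose_submatrix, submatrix_mul _ _ _ _ _ Function.bijective_id,
    submatrix_mul _ _ _ _ _ Function.bijective_id, submatrix_id_id]

open scoped ComplexOrder in
theorem posSemidef_mul_conjTranspose_sub_of_mul_eq {𝕜 ι κ σ τ : Type*} [RCLike 𝕜]
    [Fintype ι] [Fintype κ] [Fintype σ] [Fintype τ] [DecidableEq σ]
    {H : Matrix ι σ 𝕜} {S : Matrix σ τ 𝕜} {Z : Matrix ι κ 𝕜} {U : Matrix κ τ 𝕜}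
    {K : Matrix κ κ 𝕜} {c : ℝ} (hc : 0 < c) (hZU : Z * U = H * S)
    (hS : (c • 1 - S * Sᴴ).PosSemidef) (hK : (U * Uᴴ - K).PosSemidef) :
    (H * Hᴴ - (1 / c) • (Z * K * Zᴴ)).PosSemidef := by
  have hZUU : Z * (U * Uᴴ) * Zᴴ = H * (S * Sᴴ) * Hᴴ := by
    calc Z * (U * Uᴴ) * Zᴴ = (Z * U) * (Z * U)ᴴ := by
          simp only [conjTranspose_mul, Matrix.mul_assoc]
      _ = H * (S * Sᴴ) * Hᴴ := by
          simp only [hZU, conjTranspose_mul, Matrix.mul_assoc]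
  have hsplit : H * Hᴴ - (1 / c) • (Z * K * Zᴴ) =
      (1 / c) • (H * (c • 1 - S * Sᴴ) * Hᴴ) + (1 / c) • (Z * (U * Uᴴ - K) * Zᴴ) := by
    rw [Matrix.mul_sub, Matrix.sub_mul, Matrix.mul_sub, Matrix.sub_mul, hZUU, Matrix.mul_smul,
      Matrix.mul_one, Matrix.smul_mul, smul_sub, smul_sub, smul_smul, one_div,
      inv_mul_cancel₀ hc.ne', one_smul]
    abel
  rw [hsplit]
  exact ((hS.mul_mul_conjTranspose_same H).smul (by positivity)).add
    ((hK.mul_mul_conjTranspose_same Z).smul (by positivity))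

def bandToeplitz {R : Type*} [Zero R] (c : ℕ → R) (n p q : ℕ) : Matrix (Fin p) (Fin q) R :=
  of fun j k => if (k : ℕ) ≤ j ∧ (j : ℕ) ≤ k + n then c (j - k) else 0

theorem vecMul_bandToeplitz {R : Type*} [NonUnitalNonAssocSemiring R] (c g : ℕ → R)
    (n p q : ℕ) (k : Fin q) :
    ((fun j : Fin p => g j) ᵥ* bandToeplitz c n p q) k =
      ∑ s ∈ range (n + 1), if k + s < p then g (k + s) * c s else 0 := by
  simp only [vecMul, dotProduct, bandToeplitz, of_apply, mul_ite, mul_zero]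
  rw [Fin.sum_ite_window (fun t => g t * c (t - k))]
  simp only [Nat.add_sub_cancel_left]

theorem posSemidef_smul_one_sub_bandToeplitz_mul_conjTranspose (c : ℕ → ℝ) (n p q : ℕ) :
    ((((n : ℝ) + 1) * ∑ s ∈ range (n + 1), c s ^ 2) • (1 : Matrix (Fin p) (Fin p) ℝ) -
      bandToeplitz c n p q * (bandToeplitz c n p q)ᴴ).PosSemidef := by
  set S := bandToeplitz c n p q
  refine posSemidef_iff_dotProduct_mulVec.mpr ⟨?_, fun x => ?_⟩
  · simp [IsHermitian]
  set g : ℕ → ℝ := fun t => if h : t < p then x ⟨t, h⟩ else 0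
  have hg : ∀ t, p ≤ t → g t = 0 := fun t ht => dif_neg (by omega)
  have hx : x = fun j : Fin p => g j := funext fun j => by simp [g]
  have hy : ∀ k : Fin q, (x ᵥ* S) k = ∑ s ∈ range (n + 1), g (k + s) * c s := fun k => by
    rw [hx, vecMul_bandToeplitz]
    refine sum_congr rfl fun s _ => ?_
    split_ifs with h
    · rfl
    · rw [hg _ (by omega), zero_mul]
  have hquad : star x ⬝ᵥ ((((n : ℝ) + 1) * ∑ s ∈ range (n + 1), c s ^ 2) • 1 - S * Sᴴ) *ᵥ x =
      ((n : ℝ) + 1) * (∑ s ∈ range (n + 1), c s ^ 2) * ∑ j, x j ^ 2 - ∑ k, (x ᵥ* S) k ^ 2 := by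
    rw [star_trivial, sub_mulVec, dotProduct_sub, smul_mulVec, one_mulVec, dotProduct_smul,
      ← mulVec_mulVec, dotProduct_mulVec, conjTranspose_eq_transpose_of_trivial, mulVec_transpose,
      smul_eq_mul]
    simp only [dotProduct, sq]
  have hbound : ∑ k, (x ᵥ* S) k ^ 2 ≤
      ((n : ℝ) + 1) * (∑ s ∈ range (n + 1), c s ^ 2) * ∑ j, x j ^ 2 := by
    calc ∑ k, (x ᵥ* S) k ^ 2
        ≤ ∑ k : Fin q, (∑ s ∈ range (n + 1), c s ^ 2) * ∑ s ∈ range (n + 1), g (k + s) ^ 2 := by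
          refine sum_le_sum fun k _ => ?_
          rw [hy, mul_comm]
          exact sum_mul_sq_le_sq_mul_sq _ _ _
      _ = (∑ s ∈ range (n + 1), c s ^ 2) *
            ∑ s ∈ range (n + 1), ∑ k ∈ range q, g (k + s) ^ 2 := by
          rw [← mul_sum, sum_comm]
          exact congrArg _ (sum_congr rfl fun s _ =>
            Fin.sum_univ_eq_sum_range (fun k => g (k + s) ^ 2) q)
      _ ≤ (∑ s ∈ range (n + 1), c s ^ 2) * ∑ s ∈ range (n + 1), ∑ t ∈ range p, g t ^ 2 := by
          gcongr with s
          exact sum_range_shift_le_of_support (fun t => sq_nonneg _)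
            (fun t ht => by rw [hg t ht, sq, zero_mul]) q s
      _ = ((n : ℝ) + 1) * (∑ s ∈ range (n + 1), c s ^ 2) * ∑ j, x j ^ 2 := by
          rw [sum_const, card_range, hx, ← Fin.sum_univ_eq_sum_range (fun t => g t ^ 2),
            nsmul_eq_mul]
          push_cast
          ring
  rw [hquad]
  exact sub_nonneg.mpr hbound

def blockHankel {R ι : Type*} (u : ℕ → ι → R) (W K : ℕ) : Matrix (Fin W × ι) (Fin K) R :=
  of fun jl k => u (k + jl.1) jl.2

theorem blockHankel_mul_transpose {R ι : Type*} [CommSemiring R] (u : ℕ → ι → R) (W K : ℕ) :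
    blockHankel u W K * (blockHankel u W K)ᵀ =
      ∑ k ∈ range K, vecMulVec (fun jl : Fin W × ι => u (k + jl.1) jl.2)
        (fun jl : Fin W × ι => u (k + jl.1) jl.2) := by
  ext a b
  rw [mul_apply, Matrix.sum_apply, ← Fin.sum_univ_eq_sum_range]
  rfl

section ExtendedSystem

variable {n m : ℕ} (A : Matrix (Fin n) (Fin n) ℝ) (B : Matrix (Fin n) (Fin m) ℝ)
  (x0 : Fin n → ℝ) (u : ℕ → Fin m → ℝ) (d : ℕ → ℝ)

theorem stateSeq_add (k s : ℕ) :
    stateSeq A B x0 u (k + s) =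
      (A ^ s) *ᵥ stateSeq A B x0 u k + ∑ j ∈ range s, (A ^ (s - 1 - j) * B) *ᵥ u (k + j) := by
  induction s with
  | zero => simp
  | succ s ih =>
    have hstep : ∀ j ∈ range s,
        A *ᵥ ((A ^ (s - 1 - j) * B) *ᵥ u (k + j)) = (A ^ (s + 1 - 1 - j) * B) *ᵥ u (k + j) :=
      fun j hj => by
        rw [mulVec_mulVec, ← Matrix.mul_assoc, ← pow_succ',
          show s - 1 - j + 1 = s + 1 - 1 - j by simp only [mem_range] at hj; omega]
    rw [← add_assoc, stateSeq, ih, mulVec_add, mulVec_mulVec, ← pow_succ', mulVec_sum,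
      sum_congr rfl hstep, sum_range_succ, Nat.add_sub_cancel, Nat.sub_self, pow_zero,
      Matrix.one_mul, add_assoc]

theorem sum_smul_stateSeq_eq (hC : ∑ j ∈ range (n + 1), d j • A ^ (n - j) = 0)
    (k : ℕ) :
    ∑ s ∈ range (n + 1), d (n - s) • stateSeq A B x0 u (k + s) =
      ∑ j ∈ range (n + 1), ∑ q ∈ range (n - j),
        d (n - (j + 1 + q)) • (A ^ q * B) *ᵥ u (k + j) := by
  have hC' : ∑ s ∈ range (n + 1), d (n - s) • A ^ s = 0 := by
    rw [← hC, ← sum_range_reflect]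
    refine sum_congr rfl fun s hs => ?_
    rw [mem_range] at hs
    rw [Nat.add_sub_cancel, Nat.sub_sub_self (by omega)]
  have hfree : ∑ s ∈ range (n + 1), d (n - s) • (A ^ s *ᵥ stateSeq A B x0 u k) = 0 := by
    simp only [← smul_mulVec, ← sum_mulVec, hC', zero_mulVec]
  simp only [stateSeq_add, smul_add, sum_add_distrib, hfree, zero_add, smul_sum]
  rw [sum_comm' (t' := range (n + 1)) (s' := fun j => Ico (j + 1) (n + 1))
    (fun s j => by simp only [mem_range, mem_Ico]; omega)]
  refine sum_congr rfl fun j _ => ?_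
  rw [sum_Ico_eq_sum_range, Nat.add_sub_add_right]
  refine sum_congr rfl fun q _ => ?_
  rw [show j + 1 + q - 1 - j = q by omega]


theorem Ztil_embed_inl_apply (L : ℕ) (i : Fin n) (j : Fin (L + n)) (l : Fin m) :
    Ztil A B d L (embed n m L (Sum.inl i)) (j, l) =
      if (j : ℕ) ≤ n then ∑ q ∈ range (n - j), d (n - (j + 1 + q)) * (A ^ q * B) i l else 0 := by
  simp only [embed, Ztil, Mtil, of_apply, dite_eq_ite]
  split_ifs with hj
  · rw [Matrix.sum_apply, sum_range_succ']
    simp only [Matrix.smul_apply, MarkovT, of_apply, Sum.elim_inl, smul_eq_mul, mul_zero,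
      add_zero]
    exact sum_congr rfl fun q _ => by rw [show n - j - (q + 1) = n - (j + 1 + q) by omega]
  · rfl

-- The `D̃`-rows of `M̃` continue the Toeplitz pattern of `T ⊗ I_m`: all input rows look alike.
theorem Ztil_embed_inr_apply {L : ℕ} (a : Fin L) (l₀ l : Fin m) (j : Fin (L + n)) :
    Ztil A B d L (embed n m L (Sum.inr (a, l₀))) (j, l) =
      if (a : ℕ) ≤ j ∧ (j : ℕ) ≤ a + n then (if l₀ = l then d (n - (j - a)) else 0) else 0 := by
  by_cases ha : (a : ℕ) = 0
  · simp only [embed, ha, dif_pos, Ztil, Mtil, of_apply, zero_le, true_and, zero_add,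
      Nat.sub_zero]
    by_cases hj : (j : ℕ) ≤ n
    · simp [hj, Matrix.sum_apply, sum_range_succ', MarkovT]
    · simp [hj]
  · simp only [embed, ha, dif_neg, not_false_eq_true, Ztil, Tmat, of_apply]
    by_cases hj : (a : ℕ) ≤ j ∧ (j : ℕ) ≤ a + n
    · simp [hj, show 1 ≤ (j : ℕ) by omega, show (a : ℕ) - 1 ≤ j - 1 by omega,
        show (j : ℕ) - 1 ≤ a - 1 + n by omega, show (j : ℕ) - 1 - (a - 1) = j - a by omega]
    · rw [if_neg hj]
      split_ifs <;> first | omega | simp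

theorem Ztil_submatrix_mul_blockHankel (hC : ∑ j ∈ range (n + 1), d j • A ^ (n - j) = 0)
    {L N : ℕ} (hL : 1 ≤ L) (hN : L + n ≤ N) :
    (Ztil A B d L).submatrix (embed n m L) id * blockHankel u (L + n) (N - (L + n) + 1) =
      Hxu A B x0 u L N * bandToeplitz (fun s => d (n - s)) n (N - L + 1) (N - (L + n) + 1) := by
  ext i k
  have hk : (k : ℕ) + n < N - L + 1 := by omega
  have hRHS :
      (Hxu A B x0 u L N * bandToeplitz (fun s => d (n - s)) n (N - L + 1) (N - (L + n) + 1)) i k =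
      ∑ s ∈ range (n + 1), Sum.elim (fun i' => stateSeq A B x0 u (k + s) i')
        (fun il : Fin L × Fin m => u (k + s + il.1) il.2) i * d (n - s) := by
    rw [mul_apply_eq_vecMul]
    refine (vecMul_bandToeplitz _ (fun t => Sum.elim (fun i' => stateSeq A B x0 u t i')
      (fun il : Fin L × Fin m => u (t + il.1) il.2) i) n _ _ k).trans ?_
    exact sum_congr rfl fun s hs => if_pos (by simp only [mem_range] at hs; omega)
  rw [hRHS, mul_apply, Fintype.sum_prod_type]
  rcases i with i | ⟨a, l₀⟩
  · simp only [submatrix_apply, id, Ztil_embed_inl_apply, blockHankel, of_apply, ite_mul,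
      zero_mul, sum_ite_irrel, sum_const_zero, Sum.elim_inl]
    have hw := Fin.sum_ite_window (fun j => ∑ l, (∑ q ∈ range (n - j),
      d (n - (j + 1 + q)) * (A ^ q * B) i l) * u (k + j) l) 0 n (L + n)
    simp only [zero_le, true_and, zero_add] at hw
    rw [hw]
    have hx := congrFun (sum_smul_stateSeq_eq A B x0 u d hC k) i
    simp only [Finset.sum_apply, Pi.smul_apply, smul_eq_mul] at hx
    simp only [mul_comm _ (d _), hx]
    refine sum_congr rfl fun j hj => ?_
    rw [if_pos (by simp only [mem_range] at hj; omega)]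
    simp only [mulVec, dotProduct, sum_mul, mul_sum, mul_assoc]
    exact sum_comm
  · simp only [submatrix_apply, id, Ztil_embed_inr_apply, blockHankel, of_apply, ite_mul,
      zero_mul, sum_ite_irrel, sum_const_zero, sum_ite_eq, mem_univ, if_true, Sum.elim_inr]
    rw [Fin.sum_ite_window (fun j => d (n - (j - a)) * u (k + j) l₀)]
    refine sum_congr rfl fun s hs => ?_
    rw [if_pos (by simp only [mem_range] at hs; omega), Nat.add_sub_cancel_left, mul_comm,
      add_right_comm, add_assoc]

end ExtendedSystem

theorem stmt_15_general {n m : ℕ}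
    (A : Matrix (Fin n) (Fin n) ℝ) (B : Matrix (Fin n) (Fin m) ℝ)
    (d : ℕ → ℝ)
    (hdnorm : ∑ j ∈ Finset.range (n + 1), d j ^ 2 = 1)
    (hCayley : ∑ j ∈ Finset.range (n + 1), d j • A ^ (n - j) = 0)
    (L N : ℕ) (hL : 1 ≤ L) (hN : L + n ≤ N)
    (u : ℕ → Fin m → ℝ)
    (Ku : Matrix (Fin (L + n) × Fin m) (Fin (L + n) × Fin m) ℝ)
    (hPE : ((∑ k ∈ Finset.range (N - (L + n) + 1),
        vecMulVec (fun il : Fin (L + n) × Fin m => u (k + (il.1 : ℕ)) il.2)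
          (fun il : Fin (L + n) × Fin m => u (k + (il.1 : ℕ)) il.2)) - Ku).PosSemidef) :
    ∀ x0 : Fin n → ℝ,
      (Hxu A B x0 u L N * (Hxu A B x0 u L N)ᴴ -
          ((1 : ℝ) / (n + 1)) •
            ((Ztil A B d L * Ku * (Ztil A B d L)ᴴ).submatrix (embed n m L)
              (embed n m L))).PosSemidef := by
  intro x0
  have hd : ∑ s ∈ range (n + 1), d (n - s) ^ 2 = 1 := by
    rw [← hdnorm, ← sum_range_reflect (fun j => d j ^ 2) (n + 1), Nat.add_sub_cancel]
  have hS := posSemidef_smul_one_sub_bandToeplitz_mul_conjTranspose (fun s => d (n - s)) n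
    (N - L + 1) (N - (L + n) + 1)
  rw [hd, mul_one] at hS
  rw [← blockHankel_mul_transpose, ← conjTranspose_eq_transpose_of_trivial] at hPE
  rw [submatrix_mul_mul_conjTranspose]
  exact posSemidef_mul_conjTranspose_sub_of_mul_eq (by positivity)
    (Ztil_submatrix_mul_blockHankel A B x0 u d hCayley hL hN) hS hPE

/-- if `u` is `K_u`-PE of order `L+n`, then
`[H_1(x); H_L(u)] [H_1(x); H_L(u)]ᵀ ⪰ (1/(n+1)) Z̃ K_u Z̃ᵀ`. -/
theorem stmt_15 {n m : ℕ} (hn : 0 < n) (hm : 0 < m)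
    (A : Matrix (Fin n) (Fin n) ℝ) (B : Matrix (Fin n) (Fin m) ℝ)
    (d : ℕ → ℝ) (hd0 : d 0 ≠ 0)
    (hdnorm : ∑ j ∈ Finset.range (n + 1), d j ^ 2 = 1)
    (hCayley : ∑ j ∈ Finset.range (n + 1), d j • A ^ (n - j) = 0)
    (L N : ℕ) (hL : 1 ≤ L) (hN : L + n ≤ N)
    (u : ℕ → Fin m → ℝ)
    (Ku : Matrix (Fin (L + n) × Fin m) (Fin (L + n) × Fin m) ℝ) (hKu : Ku.PosDef)
    (hPE : ((∑ k ∈ Finset.range (N - (L + n) + 1),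
        vecMulVec (fun il : Fin (L + n) × Fin m => u (k + (il.1 : ℕ)) il.2)
          (fun il : Fin (L + n) × Fin m => u (k + (il.1 : ℕ)) il.2)) - Ku).PosSemidef) :
    ∀ x0 : Fin n → ℝ,
      (Hxu A B x0 u L N * (Hxu A B x0 u L N)ᴴ -
          ((1 : ℝ) / (n + 1)) •
            ((Ztil A B d L * Ku * (Ztil A B d L)ᴴ).submatrix (embed n m L)
              (embed n m L))).PosSemidef :=
  stmt_15_general A B d hdnorm hCayley L N hL hN u Ku hPE
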